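/- For every d ≥ 2 there is a constant C(d) > 0 (depending only on d) such that: for all v ∈ ℕ_0 and u ∈ ℝ_+^d with 2^v · pr(u,d) ≥ 1, one has σ(v,u) ≤ C(d) · (log(2^{v+1} pr(u,d)))^{d-1} / (2^v pr(u,d)), where log denotes the logarithm to base 2. -/

import Mathlib

/-!
Put `x_j = 2^{s_j} u_j`. Since `min x (1/x) = x⁻¹ · min (x², 1)` and `∏ x_j = 2^v pr(u,d)`
when `s_1 + ⋯ + s_d = v`, the sum `σ(v,u)` equals `(2^v pr(u,d))⁻¹ ∑_s 4^{-D(s)}`, where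
`D(s) = ∑_j max(-log₂ x_j, 0)`. If `D(s) < K` then `s_j ≥ -log₂ u_j - K` for every `j`, and the
tuples on the simplex obeying these lower bounds number at most
`(log₂(2^v pr(u,d)) + 1 + dK)^{d-1}`. Grouping the `s` by `⌊D(s)⌋ = k` and summing `4^{-k}`
times this count gives a convergent series, bounded by a constant times
`(log₂(2^{v+1} pr(u,d)))^{d-1}`.
-/

open Finset Real

namespace Finset.Nat

theorem card_antidiagonalTuple_le (d w : ℕ) :
    #(antidiagonalTuple d w) ≤ (w + 1) ^ (d - 1) := by
  cases d with
  | zero => exact card_le_one_of_subsingleton _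
  | succ n =>
    have hmaps : ∀ s ∈ antidiagonalTuple (n + 1) w,
        Fin.init s ∈ Fintype.piFinset fun _ : Fin n => range (w + 1) := by
      intro s hs
      rw [mem_antidiagonalTuple, Fin.sum_univ_castSucc] at hs
      simp only [Fintype.mem_piFinset, mem_range, Nat.lt_succ_iff]
      intro j
      have := single_le_sum (f := fun i => s (Fin.castSucc i)) (fun _ _ => Nat.zero_le _)
        (mem_univ j)
      simp only [Fin.init]
      omega
    have hinj : Set.InjOn Fin.init (antidiagonalTuple (n + 1) w : Set (Fin (n + 1) → ℕ)) := by
      intro s hs s' hs' h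
      rw [mem_coe, mem_antidiagonalTuple, Fin.sum_univ_castSucc] at hs hs'
      have hlast : s (Fin.last n) = s' (Fin.last n) := by
        have : ∀ i, s (Fin.castSucc i) = s' (Fin.castSucc i) := congrFun h
        simp only [this] at hs
        omega
      rw [← Fin.snoc_init_self s, ← Fin.snoc_init_self s', h, hlast]
    simpa using card_le_card_of_injOn _ hmaps hinj

theorem card_filter_antidiagonalTuple_le (d v : ℕ) (b : Fin d → ℕ) :
    #{s ∈ antidiagonalTuple d v | ∀ j, b j ≤ s j} ≤ (v - ∑ j, b j + 1) ^ (d - 1) := by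
  refine (card_le_card_of_injOn (· - b) (t := antidiagonalTuple d (v - ∑ j, b j))
    ?_ ?_).trans (card_antidiagonalTuple_le d _)
  · intro s hs
    rw [mem_coe, mem_filter, mem_antidiagonalTuple] at hs
    rw [mem_coe, mem_antidiagonalTuple, ← hs.1]
    exact sum_tsub_distrib _ fun i _ => hs.2 i
  · intro s hs s' hs' h
    rw [coe_filter] at hs hs'
    funext j
    have := congrFun h j
    have := hs.2 j
    have := hs'.2 j
    simp only [Pi.sub_apply] at *
    omega

theorem cast_card_filter_antidiagonalTuple_le (d v : ℕ) (t : Fin d → ℝ) {K : ℝ}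
    (hK : ∑ j, t j - d * K ≤ v) :
    (#{s ∈ antidiagonalTuple d v | ∀ j, t j - K ≤ s j} : ℝ) ≤
      (v + 1 - ∑ j, t j + d * K) ^ (d - 1) := by
  set b : Fin d → ℕ := fun j => ⌈t j - K⌉₊
  have hfilter : {s ∈ antidiagonalTuple d v | ∀ j, t j - K ≤ s j} =
      {s ∈ antidiagonalTuple d v | ∀ j, b j ≤ s j} := by
    simp only [b, Nat.ceil_le]
  have hb : ∑ j, t j - d * K ≤ ∑ j, (b j : ℝ) := by
    have := sum_le_sum fun j (_ : j ∈ univ) => Nat.le_ceil (t j - K)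
    simpa [sum_sub_distrib] using this
  have hbase : ((v - ∑ j, b j : ℕ) : ℝ) + 1 ≤ v + 1 - ∑ j, t j + d * K := by
    rcases le_total (∑ j, b j) v with h | h
    · push_cast [Nat.cast_sub h]
      linarith
    · rw [Nat.sub_eq_zero_of_le h]
      push_cast
      linarith
  rw [hfilter]
  calc (#{s ∈ antidiagonalTuple d v | ∀ j, b j ≤ s j} : ℝ)
      ≤ (((v - ∑ j, b j + 1) ^ (d - 1) : ℕ) : ℝ) := by
        exact_mod_cast card_filter_antidiagonalTuple_le d v b
    _ ≤ _ := by
        push_cast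
        exact pow_le_pow_left₀ (by positivity) hbase _

end Finset.Nat

theorem sum_rpow_le_tsum_of_card_lt_le {ι : Type*} (A : Finset ι) (N : ι → ℝ)
    (hN : ∀ s ∈ A, 0 ≤ N s) {r : ℝ} (hr₀ : 0 < r) (hr₁ : r ≤ 1) (c : ℕ → ℝ)
    (hc : ∀ k : ℕ, (#{s ∈ A | N s < k + 1} : ℝ) ≤ c k)
    (hsum : Summable fun k => c k * r ^ k) :
    ∑ s ∈ A, r ^ N s ≤ ∑' k, c k * r ^ k := by
  have hfiber : ∀ k : ℕ, ∑ s ∈ A with ⌊N s⌋₊ = k, r ^ N s ≤ c k * r ^ k := by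
    intro k
    calc ∑ s ∈ A with ⌊N s⌋₊ = k, r ^ N s
        ≤ #{s ∈ A | ⌊N s⌋₊ = k} * r ^ k := by
          rw [← nsmul_eq_mul]
          refine sum_le_card_nsmul _ _ _ fun s hs => ?_
          rw [mem_filter] at hs
          rw [← Real.rpow_natCast, ← hs.2]
          exact Real.rpow_le_rpow_of_exponent_ge hr₀ hr₁ (Nat.floor_le (hN s hs.1))
      _ ≤ #{s ∈ A | N s < k + 1} * r ^ k := by
          gcongr with s
          rintro rfl
          exact Nat.lt_floor_add_one (N s)
      _ ≤ c k * r ^ k := by gcongr; exact hc k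
  calc ∑ s ∈ A, r ^ N s = ∑ k ∈ A.image (⌊N ·⌋₊), ∑ s ∈ A with ⌊N s⌋₊ = k, r ^ N s :=
        (sum_fiberwise_of_maps_to (fun s hs => mem_image_of_mem _ hs) _).symm
    _ ≤ ∑ k ∈ A.image (⌊N ·⌋₊), c k * r ^ k := sum_le_sum fun k _ => hfiber k
    _ ≤ ∑' k, c k * r ^ k :=
        hsum.sum_le_tsum _ fun k _ =>
          mul_nonneg ((Nat.cast_nonneg _).trans (hc k)) (by positivity)

theorem min_self_one_div_eq_inv_mul_rpow {x : ℝ} (hx : 0 < x) :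
    min x (1 / x) = x⁻¹ * (1 / 4 : ℝ) ^ max (-logb 2 x) 0 := by
  rcases le_total 1 x with h | h
  · rw [max_eq_right (by linarith [logb_nonneg one_lt_two h]), rpow_zero, mul_one,
      min_eq_right ((div_le_one hx).2 h |>.trans h), one_div]
  · have hsq : (1 / 4 : ℝ) ^ (-logb 2 x) = x ^ 2 := by
      rw [show (1 / 4 : ℝ) = 2 ^ (-2 : ℝ) by norm_num, ← rpow_mul zero_le_two,
        show -2 * -logb 2 x = logb 2 x * (2 : ℕ) by ring, rpow_mul_natCast zero_le_two,
        rpow_logb zero_lt_two (by norm_num) hx]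
    rw [max_eq_left (by linarith [logb_nonpos one_lt_two hx.le h]), hsq,
      min_eq_left (h.trans (one_le_one_div hx h)), sq, inv_mul_cancel_left₀ hx.ne']

theorem summable_add_one_pow_mul_geometric (p : ℕ) {r : ℝ} (hr₀ : 0 < r) (hr₁ : r < 1) :
    Summable fun k : ℕ => ((k : ℝ) + 1) ^ p * r ^ k := by
  have h := (summable_nat_add_iff 1).2 <|
    summable_pow_mul_geometric_of_norm_lt_one p (r := r) (by rwa [norm_of_nonneg hr₀.le])
  refine (h.mul_left r⁻¹).congr fun k => ?_
  rw [pow_succ, Nat.cast_add_one]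
  field_simp

noncomputable def logDefect {d : ℕ} (u : Fin d → ℝ) (s : Fin d → ℕ) : ℝ :=
  ∑ j, max (-logb 2 (2 ^ s j * u j)) 0

theorem logDefect_nonneg {d : ℕ} (u : Fin d → ℝ) (s : Fin d → ℕ) : 0 ≤ logDefect u s :=
  sum_nonneg fun _ _ => le_max_right _ _

theorem prod_min_one_div_eq {d : ℕ} {u : Fin d → ℝ} (hu : ∀ j, 0 < u j) (s : Fin d → ℕ) :
    ∏ j, min ((2 : ℝ) ^ s j * u j) (1 / ((2 : ℝ) ^ s j * u j)) =
      ((2 : ℝ) ^ (∑ j, s j) * ∏ j, u j)⁻¹ * (1 / 4 : ℝ) ^ logDefect u s := by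
  rw [logDefect, rpow_sum_of_pos (by norm_num), ← prod_pow_eq_pow_sum, ← prod_mul_distrib,
    ← prod_inv_distrib, ← prod_mul_distrib]
  exact prod_congr rfl fun j _ => min_self_one_div_eq_inv_mul_rpow (by have := hu j; positivity)

theorem card_logDefect_lt_le {d v : ℕ} {u : Fin d → ℝ} (hu : ∀ j, 0 < u j)
    (hvol : 1 ≤ (2 : ℝ) ^ v * ∏ j, u j) {K : ℝ} (hK : 0 ≤ K) :
    (#{s ∈ Nat.antidiagonalTuple d v | logDefect u s < K} : ℝ) ≤
      (logb 2 ((2 : ℝ) ^ v * ∏ j, u j) + 1 + d * K) ^ (d - 1) := by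
  have hlog : logb 2 ((2 : ℝ) ^ v * ∏ j, u j) = v - ∑ j, -logb 2 (u j) := by
    rw [logb_mul (by positivity) (prod_pos fun j _ => hu j).ne', logb_pow,
      logb_self_eq_one one_lt_two, logb_prod _ _ fun j _ => (hu j).ne', sum_neg_distrib]
    ring
  have hvol' : 0 ≤ logb 2 ((2 : ℝ) ^ v * ∏ j, u j) := logb_nonneg one_lt_two hvol
  calc (#{s ∈ Nat.antidiagonalTuple d v | logDefect u s < K} : ℝ)
      ≤ #{s ∈ Nat.antidiagonalTuple d v | ∀ j, -logb 2 (u j) - K ≤ s j} := by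
        gcongr with s
        intro hs j
        have hj : max (-logb 2 (2 ^ s j * u j)) 0 ≤ logDefect u s :=
          single_le_sum (f := fun j => max (-logb 2 (2 ^ s j * u j)) 0)
            (fun _ _ => le_max_right _ _) (mem_univ j)
        rw [logb_mul (by positivity) (hu j).ne', logb_pow, logb_self_eq_one one_lt_two,
          mul_one] at hj
        linarith [le_max_left (-(s j + logb 2 (u j))) 0]
    _ ≤ (v + 1 - ∑ j, -logb 2 (u j) + d * K) ^ (d - 1) := by
        refine Nat.cast_card_filter_antidiagonalTuple_le d v _ ?_
        have : 0 ≤ (d : ℝ) * K := by positivity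
        linarith
    _ = _ := by rw [hlog]; ring

theorem sum_rpow_logDefect_le {d v : ℕ} {u : Fin d → ℝ} (hu : ∀ j, 0 < u j)
    (hvol : 1 ≤ (2 : ℝ) ^ v * ∏ j, u j) :
    ∑ s ∈ Nat.antidiagonalTuple d v, (1 / 4 : ℝ) ^ logDefect u s ≤
      (d + 1) ^ (d - 1) * (∑' k : ℕ, ((k : ℝ) + 1) ^ (d - 1) * (1 / 4 : ℝ) ^ k) *
        (logb 2 ((2 : ℝ) ^ v * ∏ j, u j) + 1) ^ (d - 1) := by
  set L := logb 2 ((2 : ℝ) ^ v * ∏ j, u j) + 1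
  have hL : 1 ≤ L := by linarith [logb_nonneg one_lt_two hvol]
  have hcard (k : ℕ) : (#{s ∈ Nat.antidiagonalTuple d v | logDefect u s < k + 1} : ℝ) ≤
      ((d + 1) * L) ^ (d - 1) * (((k : ℝ) + 1) ^ (d - 1)) := by
    refine (card_logDefect_lt_le hu hvol (by positivity)).trans ?_
    rw [← mul_pow]
    gcongr
    have hk : (0 : ℝ) ≤ k := k.cast_nonneg
    nlinarith [mul_nonneg (by positivity : (0 : ℝ) ≤ d * (k + 1)) (sub_nonneg.2 hL)]
  have hsum :=
    summable_add_one_pow_mul_geometric (d - 1) (r := 1 / 4) (by norm_num) (by norm_num)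
  calc ∑ s ∈ Nat.antidiagonalTuple d v, (1 / 4 : ℝ) ^ logDefect u s
      ≤ ∑' k : ℕ, ((d + 1) * L) ^ (d - 1) * ((k : ℝ) + 1) ^ (d - 1) * (1 / 4 : ℝ) ^ k :=
        sum_rpow_le_tsum_of_card_lt_le _ _ (fun s _ => logDefect_nonneg u s) (by norm_num)
          (by norm_num) _ hcard (by simpa only [mul_assoc] using hsum.mul_left _)
    _ = _ := by simp_rw [mul_assoc]; rw [tsum_mul_left, mul_pow]; ring

theorem sigma_bound_large_volume (d : ℕ) :
    ∃ C : ℝ, 0 < C ∧ ∀ v : ℕ, ∀ u : Fin d → ℝ, (∀ j, 0 < u j) →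
      1 ≤ (2 : ℝ) ^ v * ∏ j, u j →
      ∑ s ∈ Finset.Nat.antidiagonalTuple d v,
          ∏ j, min ((2 : ℝ) ^ s j * u j) (1 / ((2 : ℝ) ^ s j * u j)) ≤
        C * Real.logb 2 ((2 : ℝ) ^ (v + 1) * ∏ j, u j) ^ (d - 1) /
          ((2 : ℝ) ^ v * ∏ j, u j) := by
  have hsum :=
    summable_add_one_pow_mul_geometric (d - 1) (r := 1 / 4) (by norm_num) (by norm_num)
  refine ⟨(d + 1) ^ (d - 1) * ∑' k : ℕ, ((k : ℝ) + 1) ^ (d - 1) * (1 / 4 : ℝ) ^ k,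
    mul_pos (by positivity) (hsum.tsum_pos (fun k => by positivity) 0 (by norm_num)), ?_⟩
  intro v u hu hvol
  set Q := (2 : ℝ) ^ v * ∏ j, u j
  have hlog : logb 2 ((2 : ℝ) ^ (v + 1) * ∏ j, u j) = logb 2 Q + 1 := by
    rw [pow_succ, mul_right_comm, logb_mul (by positivity) two_ne_zero,
      logb_self_eq_one one_lt_two]
  calc _ = Q⁻¹ * ∑ s ∈ Nat.antidiagonalTuple d v, (1 / 4 : ℝ) ^ logDefect u s := by
        rw [mul_sum]
        refine sum_congr rfl fun s hs => ?_
        rw [prod_min_one_div_eq hu, Nat.mem_antidiagonalTuple.1 hs]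
    _ ≤ Q⁻¹ * ((d + 1) ^ (d - 1) * (∑' k : ℕ, ((k : ℝ) + 1) ^ (d - 1) * (1 / 4 : ℝ) ^ k) *
          (logb 2 Q + 1) ^ (d - 1)) := by
        gcongr
        exact sum_rpow_logDefect_le hu hvol
    _ = _ := by rw [hlog, inv_mul_eq_div]
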